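/- arXiv:2603.07628 — 5 statements merged into one kernel-verified Lean document; each statement's English description precedes it below -/
import Mathlib

section
/- Let 0 < α, β < 1, s, t > 0, and let f : [0,s] × [0,t] → ℝ be measurable with |f(u,v)| ≤ M for all (u,v). Then for all 0 < x₂ ≤ x₁ ≤ s and 0 < y₂ ≤ y₁ ≤ t, the two-parameter Riemann–Liouville integrals satisfy |I^{α,β}_{0+} f(x₁,y₁) − I^{α,β}_{0+} f(x₂,y₂)| ≤ (2M(s^α + t^β))/(αβ Γ(α)Γ(β)) · (|x₁^α − x₂^α| + |x₁ − x₂|^α + |y₁^β − y₂^β| + |y₁ − y₂|^β). -/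
open MeasureTheory

/-- Two-parameter left-sided Riemann–Liouville fractional integral. -/
noncomputable def RLint (α β : ℝ) (f : ℝ → ℝ → ℝ) (x y : ℝ) : ℝ :=
  (1 / (Real.Gamma α * Real.Gamma β)) *
    ∫ u in (0:ℝ)..x, ∫ v in (0:ℝ)..y, (x - u) ^ (α - 1) * (y - v) ^ (β - 1) * f u v

/-- Antiderivative computation for the RL kernel. -/
lemma ker_integral {γ : ℝ} (hγ : 0 < γ) (c a b : ℝ) :
    (∫ v in a..b, (c - v) ^ (γ - 1)) = ((c - a) ^ γ - (c - b) ^ γ) / γ := by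
  rw [intervalIntegral.integral_comp_sub_left (fun w => w ^ (γ - 1)) c,
    integral_rpow (Or.inl (by linarith))]
  norm_num

/-- The RL kernel is interval integrable. -/
lemma ker_intble {γ : ℝ} (hγ : 0 < γ) (c a b : ℝ) :
    IntervalIntegrable (fun v => (c - v) ^ (γ - 1)) volume a b := by
  have h := (intervalIntegral.intervalIntegrable_rpow' (a := c - a) (b := c - b)
    (by linarith : (-1:ℝ) < γ - 1)).comp_sub_left c
  simpa using h

/-- Kernel times a bounded measurable function is interval integrable. -/
lemma ker_mul_intble {γ : ℝ} (hγ : 0 < γ) (c a b K : ℝ) {h : ℝ → ℝ} (hm : Measurable h)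
    (hb : ∀ v ∈ Set.uIoc a b, |h v| ≤ K) :
    IntervalIntegrable (fun v => (c - v) ^ (γ - 1) * h v) volume a b := by
  rw [intervalIntegrable_iff]
  have hker := ker_intble hγ c a b
  rw [intervalIntegrable_iff] at hker
  have hbd : ∀ᵐ v ∂(volume.restrict (Set.uIoc a b)), ‖h v‖ ≤ K := by
    refine (ae_restrict_iff' measurableSet_uIoc).mpr (Filter.Eventually.of_forall fun v hv => ?_)
    simpa [Real.norm_eq_abs] using hb v hv
  have hint : Integrable (fun v => h v * (c - v) ^ (γ - 1))
      (volume.restrict (Set.uIoc a b)) := hker.bdd_mul hm.aestronglyMeasurable hbd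
  simpa [mul_comm, IntegrableOn] using hint

/-- One-dimensional basic bound for the RL integral. -/
lemma RL_bound {γ : ℝ} (hγ : 0 < γ) {x K : ℝ} (hx : 0 ≤ x) {h : ℝ → ℝ} (hm : Measurable h)
    (hb : ∀ v ∈ Set.Ioc (0:ℝ) x, |h v| ≤ K) :
    |∫ v in (0:ℝ)..x, (x - v) ^ (γ - 1) * h v| ≤ K * x ^ γ / γ := by
  rcases eq_or_lt_of_le hx with rfl | hx'
  · simp [Real.zero_rpow hγ.ne']
  have hK : 0 ≤ K := le_trans (abs_nonneg _) (hb x ⟨hx', le_refl x⟩)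
  have hbound : ∀ᵐ v ∂(volume.restrict (Set.uIoc (0:ℝ) x)),
      ‖(x - v) ^ (γ - 1) * h v‖ ≤ K * (x - v) ^ (γ - 1) := by
    rw [Set.uIoc_of_le hx]
    refine (ae_restrict_iff' measurableSet_Ioc).mpr (Filter.Eventually.of_forall fun v hv => ?_)
    have h1 : (0:ℝ) ≤ (x - v) ^ (γ - 1) := Real.rpow_nonneg (by linarith [hv.2]) _
    rw [Real.norm_eq_abs, abs_mul, abs_of_nonneg h1, mul_comm K]
    exact mul_le_mul_of_nonneg_left (hb v hv) h1
  have hint : IntervalIntegrable (fun v => K * (x - v) ^ (γ - 1)) volume 0 x :=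
    (ker_intble hγ x 0 x).const_mul K
  have hle := intervalIntegral.norm_integral_le_abs_of_norm_le hbound hint
  rw [Real.norm_eq_abs] at hle
  refine hle.trans (le_of_eq ?_)
  rw [intervalIntegral.integral_const_mul, ker_integral hγ]
  rw [sub_zero, sub_self, Real.zero_rpow hγ.ne', sub_zero]
  rw [abs_of_nonneg (by positivity)]
  ring

/-- One-dimensional difference estimate for the RL integral. -/
lemma RL_diff {γ : ℝ} (hγ : 0 < γ) (hγ1 : γ < 1) {x₁ x₂ K : ℝ} (hx₂ : 0 < x₂) (hx : x₂ ≤ x₁)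
    {h : ℝ → ℝ} (hm : Measurable h) (hb : ∀ v ∈ Set.Ioc (0:ℝ) x₁, |h v| ≤ K) :
    |(∫ v in (0:ℝ)..x₁, (x₁ - v) ^ (γ - 1) * h v) -
        ∫ v in (0:ℝ)..x₂, (x₂ - v) ^ (γ - 1) * h v| ≤
      K / γ * (|x₁ ^ γ - x₂ ^ γ| + 2 * (x₁ - x₂) ^ γ) := by
  have hx₁ : 0 < x₁ := lt_of_lt_of_le hx₂ hx
  have hK : 0 ≤ K := le_trans (abs_nonneg _) (hb x₁ ⟨hx₁, le_refl x₁⟩)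
  have hsub1 : Set.uIoc (0:ℝ) x₂ ⊆ Set.Ioc (0:ℝ) x₁ := by
    rw [Set.uIoc_of_le hx₂.le]; exact Set.Ioc_subset_Ioc_right hx
  have hsub2 : Set.uIoc x₂ x₁ ⊆ Set.Ioc (0:ℝ) x₁ := by
    rw [Set.uIoc_of_le hx]; exact Set.Ioc_subset_Ioc_left hx₂.le
  have hi1a : IntervalIntegrable (fun v => (x₁ - v) ^ (γ - 1) * h v) volume 0 x₂ :=
    ker_mul_intble hγ x₁ 0 x₂ K hm fun v hv => hb v (hsub1 hv)
  have hi1b : IntervalIntegrable (fun v => (x₁ - v) ^ (γ - 1) * h v) volume x₂ x₁ :=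
    ker_mul_intble hγ x₁ x₂ x₁ K hm fun v hv => hb v (hsub2 hv)
  have hi2 : IntervalIntegrable (fun v => (x₂ - v) ^ (γ - 1) * h v) volume 0 x₂ :=
    ker_mul_intble hγ x₂ 0 x₂ K hm fun v hv => hb v (hsub1 hv)
  have hsplit : (∫ v in (0:ℝ)..x₁, (x₁ - v) ^ (γ - 1) * h v) =
      (∫ v in (0:ℝ)..x₂, (x₁ - v) ^ (γ - 1) * h v) +
        ∫ v in x₂..x₁, (x₁ - v) ^ (γ - 1) * h v :=
    (intervalIntegral.integral_add_adjacent_intervals hi1a hi1b).symm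
  -- first piece : difference of kernels on [0, x₂]
  have hdiffint : (∫ v in (0:ℝ)..x₂, (x₁ - v) ^ (γ - 1) * h v) -
      (∫ v in (0:ℝ)..x₂, (x₂ - v) ^ (γ - 1) * h v) =
      ∫ v in (0:ℝ)..x₂, ((x₁ - v) ^ (γ - 1) - (x₂ - v) ^ (γ - 1)) * h v := by
    rw [← intervalIntegral.integral_sub hi1a hi2]
    congr 1; ext v; ring
  have hne : ∀ᵐ v ∂(volume.restrict (Set.uIoc (0:ℝ) x₂)), v ≠ x₂ := by
    refine ae_restrict_of_ae ?_
    rw [Filter.eventually_iff, mem_ae_iff]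
    simpa [Set.compl_setOf] using measure_singleton (α := ℝ) x₂
  have hbound1 : ∀ᵐ v ∂(volume.restrict (Set.uIoc (0:ℝ) x₂)),
      ‖((x₁ - v) ^ (γ - 1) - (x₂ - v) ^ (γ - 1)) * h v‖ ≤
        K * ((x₂ - v) ^ (γ - 1) - (x₁ - v) ^ (γ - 1)) := by
    filter_upwards [ae_restrict_mem measurableSet_uIoc, hne] with v hv hvne
    rw [Set.uIoc_of_le hx₂.le] at hv
    have hvlt : v < x₂ := lt_of_le_of_ne hv.2 hvne
    have h2pos : (0:ℝ) < x₂ - v := by linarith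
    have hmono : (x₁ - v) ^ (γ - 1) ≤ (x₂ - v) ^ (γ - 1) :=
      Real.rpow_le_rpow_of_nonpos h2pos (by linarith) (by linarith)
    have h1nn : (0:ℝ) ≤ (x₁ - v) ^ (γ - 1) := Real.rpow_nonneg (by linarith) _
    rw [Real.norm_eq_abs, abs_mul, abs_of_nonpos (by linarith), neg_sub, mul_comm K]
    exact mul_le_mul (le_refl _) (hb v ⟨hv.1, by linarith⟩) (abs_nonneg _) (by linarith)
  have hintK : IntervalIntegrable
      (fun v => K * ((x₂ - v) ^ (γ - 1) - (x₁ - v) ^ (γ - 1))) volume 0 x₂ :=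
    ((ker_intble hγ x₂ 0 x₂).sub (ker_intble hγ x₁ 0 x₂)).const_mul K
  have hT1 := intervalIntegral.norm_integral_le_abs_of_norm_le hbound1 hintK
  rw [Real.norm_eq_abs] at hT1
  have hval1 : (∫ v in (0:ℝ)..x₂, K * ((x₂ - v) ^ (γ - 1) - (x₁ - v) ^ (γ - 1))) =
      K * ((x₂ ^ γ - x₁ ^ γ + (x₁ - x₂) ^ γ) / γ) := by
    rw [intervalIntegral.integral_const_mul,
      intervalIntegral.integral_sub (ker_intble hγ x₂ 0 x₂) (ker_intble hγ x₁ 0 x₂),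
      ker_integral hγ, ker_integral hγ]
    rw [sub_zero, sub_self, Real.zero_rpow hγ.ne', sub_zero, sub_zero]
    ring
  have hT1' : |∫ v in (0:ℝ)..x₂, ((x₁ - v) ^ (γ - 1) - (x₂ - v) ^ (γ - 1)) * h v| ≤
      K / γ * (|x₁ ^ γ - x₂ ^ γ| + (x₁ - x₂) ^ γ) := by
    refine hT1.trans ?_
    rw [hval1, abs_mul, abs_of_nonneg hK, abs_div, abs_of_nonneg hγ.le]
    rw [div_mul_eq_mul_div, mul_div_assoc]
    refine mul_le_mul_of_nonneg_left ?_ hK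
    refine div_le_div_of_nonneg_right ?_ hγ.le
    calc |x₂ ^ γ - x₁ ^ γ + (x₁ - x₂) ^ γ| ≤ |x₂ ^ γ - x₁ ^ γ| + |(x₁ - x₂) ^ γ| := abs_add_le _ _
      _ = |x₁ ^ γ - x₂ ^ γ| + (x₁ - x₂) ^ γ := by
          rw [abs_sub_comm, abs_of_nonneg (Real.rpow_nonneg (by linarith) _)]
  -- second piece on [x₂, x₁]
  have hbound2 : ∀ᵐ v ∂(volume.restrict (Set.uIoc x₂ x₁)),
      ‖(x₁ - v) ^ (γ - 1) * h v‖ ≤ K * (x₁ - v) ^ (γ - 1) := by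
    refine (ae_restrict_iff' measurableSet_uIoc).mpr (Filter.Eventually.of_forall fun v hv => ?_)
    have hv' := hsub2 hv
    have h1 : (0:ℝ) ≤ (x₁ - v) ^ (γ - 1) := Real.rpow_nonneg (by linarith [hv'.2]) _
    rw [Real.norm_eq_abs, abs_mul, abs_of_nonneg h1, mul_comm K]
    exact mul_le_mul_of_nonneg_left (hb v hv') h1
  have hint2 : IntervalIntegrable (fun v => K * (x₁ - v) ^ (γ - 1)) volume x₂ x₁ :=
    (ker_intble hγ x₁ x₂ x₁).const_mul K
  have hT2 := intervalIntegral.norm_integral_le_abs_of_norm_le hbound2 hint2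
  rw [Real.norm_eq_abs] at hT2
  have hval2 : (∫ v in x₂..x₁, K * (x₁ - v) ^ (γ - 1)) = K * ((x₁ - x₂) ^ γ / γ) := by
    rw [intervalIntegral.integral_const_mul, ker_integral hγ, sub_self,
      Real.zero_rpow hγ.ne', sub_zero]
  have hT2' : |∫ v in x₂..x₁, (x₁ - v) ^ (γ - 1) * h v| ≤ K / γ * (x₁ - x₂) ^ γ := by
    refine hT2.trans ?_
    rw [hval2, abs_of_nonneg (mul_nonneg hK (div_nonneg (Real.rpow_nonneg (by linarith) _) hγ.le))]
    rw [div_mul_eq_mul_div, mul_div_assoc]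
  calc |(∫ v in (0:ℝ)..x₁, (x₁ - v) ^ (γ - 1) * h v) -
        ∫ v in (0:ℝ)..x₂, (x₂ - v) ^ (γ - 1) * h v|
      = |((∫ v in (0:ℝ)..x₂, (x₁ - v) ^ (γ - 1) * h v) -
            ∫ v in (0:ℝ)..x₂, (x₂ - v) ^ (γ - 1) * h v) +
          ∫ v in x₂..x₁, (x₁ - v) ^ (γ - 1) * h v| := by
        rw [hsplit]; congr 1; ring
    _ = |(∫ v in (0:ℝ)..x₂, ((x₁ - v) ^ (γ - 1) - (x₂ - v) ^ (γ - 1)) * h v) +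
          ∫ v in x₂..x₁, (x₁ - v) ^ (γ - 1) * h v| := by rw [hdiffint]
    _ ≤ |∫ v in (0:ℝ)..x₂, ((x₁ - v) ^ (γ - 1) - (x₂ - v) ^ (γ - 1)) * h v| +
          |∫ v in x₂..x₁, (x₁ - v) ^ (γ - 1) * h v| := abs_add_le _ _
    _ ≤ K / γ * (|x₁ ^ γ - x₂ ^ γ| + (x₁ - x₂) ^ γ) + K / γ * (x₁ - x₂) ^ γ :=
        add_le_add hT1' hT2'
    _ = K / γ * (|x₁ ^ γ - x₂ ^ γ| + 2 * (x₁ - x₂) ^ γ) := by ring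

theorem rl_two_param_diff_estimate
    (α β s t M : ℝ) (hα : 0 < α) (hα1 : α < 1) (hβ : 0 < β) (hβ1 : β < 1)
    (hs : 0 < s) (ht : 0 < t)
    (f : ℝ → ℝ → ℝ)
    (hmeas : Measurable (Function.uncurry f))
    (hM : ∀ u ∈ Set.Icc (0:ℝ) s, ∀ v ∈ Set.Icc (0:ℝ) t, |f u v| ≤ M)
    (x₁ x₂ y₁ y₂ : ℝ)
    (hx₂ : 0 < x₂) (hx : x₂ ≤ x₁) (hx₁ : x₁ ≤ s)
    (hy₂ : 0 < y₂) (hy : y₂ ≤ y₁) (hy₁ : y₁ ≤ t) :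
    |RLint α β f x₁ y₁ - RLint α β f x₂ y₂| ≤
      (2 * M * (s ^ α + t ^ β)) / (α * β * Real.Gamma α * Real.Gamma β) *
        (|x₁ ^ α - x₂ ^ α| + |x₁ - x₂| ^ α + |y₁ ^ β - y₂ ^ β| + |y₁ - y₂| ^ β) := by
  have hΓα : 0 < Real.Gamma α := Real.Gamma_pos_of_pos hα
  have hΓβ : 0 < Real.Gamma β := Real.Gamma_pos_of_pos hβ
  have hM0 : 0 ≤ M :=
    le_trans (abs_nonneg _) (hM 0 ⟨le_refl 0, hs.le⟩ 0 ⟨le_refl 0, ht.le⟩)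
  set G : ℝ → ℝ → ℝ := fun u y => ∫ v in (0:ℝ)..y, (y - v) ^ (β - 1) * f u v with hG
  have hGm : ∀ y : ℝ, 0 ≤ y → Measurable fun u => G u y := by
    intro y hy
    have hF : Measurable fun p : ℝ × ℝ => (y - p.2) ^ (β - 1) * f p.1 p.2 :=
      ((measurable_const.sub measurable_snd).pow_const _).mul hmeas
    have h1 : (fun u => G u y) = fun u =>
        ∫ v, (y - v) ^ (β - 1) * f u v ∂(volume.restrict (Set.Ioc 0 y)) := by
      funext u
      exact intervalIntegral.integral_of_le hy
    rw [h1]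
    exact (MeasureTheory.StronglyMeasurable.integral_prod_right
      (f := fun u v => (y - v) ^ (β - 1) * f u v) hF.stronglyMeasurable).measurable
  have hGb : ∀ y : ℝ, 0 ≤ y → y ≤ t → ∀ u ∈ Set.Icc (0:ℝ) s,
      |G u y| ≤ M * t ^ β / β := by
    intro y hy0 hyt u hu
    have h1 : |G u y| ≤ M * y ^ β / β := by
      refine RL_bound hβ hy0 hmeas.of_uncurry_left ?_
      intro v hv
      exact hM u hu v ⟨hv.1.le, hv.2.trans hyt⟩
    refine h1.trans ?_
    have h2 : y ^ β ≤ t ^ β := Real.rpow_le_rpow hy0 hyt hβ.le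
    gcongr
  have hGdiff : ∀ u ∈ Set.Icc (0:ℝ) s,
      |G u y₁ - G u y₂| ≤ M / β * (|y₁ ^ β - y₂ ^ β| + 2 * (y₁ - y₂) ^ β) := by
    intro u hu
    refine RL_diff hβ hβ1 hy₂ hy hmeas.of_uncurry_left ?_
    intro v hv
    exact hM u hu v ⟨hv.1.le, hv.2.trans hy₁⟩
  have hrw : ∀ x y : ℝ, RLint α β f x y =
      (1 / (Real.Gamma α * Real.Gamma β)) *
        ∫ u in (0:ℝ)..x, (x - u) ^ (α - 1) * G u y := by
    intro x y
    unfold RLint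
    congr 1
    refine intervalIntegral.integral_congr fun u _ => ?_
    rw [hG]
    rw [← intervalIntegral.integral_const_mul]
    exact intervalIntegral.integral_congr fun v _ => by ring
  have hy₁0 : (0:ℝ) ≤ y₁ := le_trans hy₂.le hy
  have hx₁s : x₁ ≤ s := hx₁
  have hsub : Set.uIoc (0:ℝ) x₂ ⊆ Set.Icc (0:ℝ) s := by
    rw [Set.uIoc_of_le hx₂.le]
    exact fun u hu => ⟨hu.1.le, hu.2.trans (hx.trans hx₁)⟩
  -- A term
  have hA : |(∫ u in (0:ℝ)..x₁, (x₁ - u) ^ (α - 1) * G u y₁) -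
      ∫ u in (0:ℝ)..x₂, (x₂ - u) ^ (α - 1) * G u y₁| ≤
      (M * t ^ β / β) / α * (|x₁ ^ α - x₂ ^ α| + 2 * (x₁ - x₂) ^ α) := by
    refine RL_diff hα hα1 hx₂ hx (hGm y₁ hy₁0) ?_
    intro u hu
    exact hGb y₁ hy₁0 hy₁ u ⟨hu.1.le, hu.2.trans hx₁⟩
  -- B term
  have hB : |∫ u in (0:ℝ)..x₂, (x₂ - u) ^ (α - 1) * (G u y₁ - G u y₂)| ≤
      (M / β * (|y₁ ^ β - y₂ ^ β| + 2 * (y₁ - y₂) ^ β)) * x₂ ^ α / α := by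
    refine RL_bound hα hx₂.le ((hGm y₁ hy₁0).sub (hGm y₂ hy₂.le)) ?_
    intro u hu
    exact hGdiff u ⟨hu.1.le, hu.2.trans (hx.trans hx₁)⟩
  have int1 : IntervalIntegrable (fun u => (x₂ - u) ^ (α - 1) * G u y₁) volume 0 x₂ :=
    ker_mul_intble hα x₂ 0 x₂ (M * t ^ β / β) (hGm y₁ hy₁0)
      fun u hu => hGb y₁ hy₁0 hy₁ u (hsub hu)
  have int2 : IntervalIntegrable (fun u => (x₂ - u) ^ (α - 1) * G u y₂) volume 0 x₂ :=
    ker_mul_intble hα x₂ 0 x₂ (M * t ^ β / β) (hGm y₂ hy₂.le)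
      fun u hu => hGb y₂ hy₂.le (hy.trans hy₁) u (hsub hu)
  have hBsplit : (∫ u in (0:ℝ)..x₂, (x₂ - u) ^ (α - 1) * G u y₁) -
      (∫ u in (0:ℝ)..x₂, (x₂ - u) ^ (α - 1) * G u y₂) =
      ∫ u in (0:ℝ)..x₂, (x₂ - u) ^ (α - 1) * (G u y₁ - G u y₂) := by
    rw [← intervalIntegral.integral_sub int1 int2]
    exact intervalIntegral.integral_congr fun u _ => by ring
  -- combine
  have hKy0 : 0 ≤ M / β * (|y₁ ^ β - y₂ ^ β| + 2 * (y₁ - y₂) ^ β) := by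
    refine mul_nonneg (div_nonneg hM0 hβ.le) ?_
    exact add_nonneg (abs_nonneg _)
      (mul_nonneg (by norm_num) (Real.rpow_nonneg (by linarith) _))
  have hB' : |∫ u in (0:ℝ)..x₂, (x₂ - u) ^ (α - 1) * (G u y₁ - G u y₂)| ≤
      (M / β * (|y₁ ^ β - y₂ ^ β| + 2 * (y₁ - y₂) ^ β)) * s ^ α / α := by
    refine hB.trans ?_
    gcongr
    exact hx.trans hx₁
  have hC : 0 < 1 / (Real.Gamma α * Real.Gamma β) := by positivity
  rw [hrw x₁ y₁, hrw x₂ y₂, ← mul_sub, abs_mul, abs_of_pos hC]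
  have hstep : |(∫ u in (0:ℝ)..x₁, (x₁ - u) ^ (α - 1) * G u y₁) -
      ∫ u in (0:ℝ)..x₂, (x₂ - u) ^ (α - 1) * G u y₂| ≤
      (M * t ^ β / β) / α * (|x₁ ^ α - x₂ ^ α| + 2 * (x₁ - x₂) ^ α) +
        (M / β * (|y₁ ^ β - y₂ ^ β| + 2 * (y₁ - y₂) ^ β)) * s ^ α / α := by
    calc |(∫ u in (0:ℝ)..x₁, (x₁ - u) ^ (α - 1) * G u y₁) -
        ∫ u in (0:ℝ)..x₂, (x₂ - u) ^ (α - 1) * G u y₂|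
        = |((∫ u in (0:ℝ)..x₁, (x₁ - u) ^ (α - 1) * G u y₁) -
              ∫ u in (0:ℝ)..x₂, (x₂ - u) ^ (α - 1) * G u y₁) +
            ((∫ u in (0:ℝ)..x₂, (x₂ - u) ^ (α - 1) * G u y₁) -
              ∫ u in (0:ℝ)..x₂, (x₂ - u) ^ (α - 1) * G u y₂)| := by congr 1; ring
      _ ≤ |(∫ u in (0:ℝ)..x₁, (x₁ - u) ^ (α - 1) * G u y₁) -
              ∫ u in (0:ℝ)..x₂, (x₂ - u) ^ (α - 1) * G u y₁| +
            |(∫ u in (0:ℝ)..x₂, (x₂ - u) ^ (α - 1) * G u y₁) -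
              ∫ u in (0:ℝ)..x₂, (x₂ - u) ^ (α - 1) * G u y₂| := abs_add_le _ _
      _ ≤ _ := by
          rw [hBsplit]
          exact add_le_add hA hB'
  refine le_trans (mul_le_mul_of_nonneg_left hstep hC.le) ?_
  rw [abs_of_nonneg (sub_nonneg.mpr hx), abs_of_nonneg (sub_nonneg.mpr hy)]
  have ha : 0 ≤ |x₁ ^ α - x₂ ^ α| := abs_nonneg _
  have hb : 0 ≤ (x₁ - x₂) ^ α := Real.rpow_nonneg (by linarith) _
  have hc : 0 ≤ |y₁ ^ β - y₂ ^ β| := abs_nonneg _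
  have hd : 0 ≤ (y₁ - y₂) ^ β := Real.rpow_nonneg (by linarith) _
  have hS : 0 ≤ s ^ α := Real.rpow_nonneg hs.le _
  have hT : 0 ≤ t ^ β := Real.rpow_nonneg ht.le _
  have key : (M * t ^ β / β) / α * (|x₁ ^ α - x₂ ^ α| + 2 * (x₁ - x₂) ^ α) +
      (M / β * (|y₁ ^ β - y₂ ^ β| + 2 * (y₁ - y₂) ^ β)) * s ^ α / α ≤
      (2 * M * (s ^ α + t ^ β)) / (α * β) *
        (|x₁ ^ α - x₂ ^ α| + (x₁ - x₂) ^ α + |y₁ ^ β - y₂ ^ β| + (y₁ - y₂) ^ β) := by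
    have e1 : (M * t ^ β / β) / α * (|x₁ ^ α - x₂ ^ α| + 2 * (x₁ - x₂) ^ α) =
        (M * t ^ β * (|x₁ ^ α - x₂ ^ α| + 2 * (x₁ - x₂) ^ α)) / (α * β) := by
      ring
    have e2 : (M / β * (|y₁ ^ β - y₂ ^ β| + 2 * (y₁ - y₂) ^ β)) * s ^ α / α =
        (M * s ^ α * (|y₁ ^ β - y₂ ^ β| + 2 * (y₁ - y₂) ^ β)) / (α * β) := by
      ring
    rw [e1, e2, ← add_div, div_mul_eq_mul_div]
    refine div_le_div_of_nonneg_right ?_ (by positivity)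
    nlinarith [mul_nonneg (mul_nonneg hM0 hS) ha, mul_nonneg (mul_nonneg hM0 hS) hb,
      mul_nonneg (mul_nonneg hM0 hS) hc, mul_nonneg (mul_nonneg hM0 hS) hd,
      mul_nonneg (mul_nonneg hM0 hT) ha, mul_nonneg (mul_nonneg hM0 hT) hb,
      mul_nonneg (mul_nonneg hM0 hT) hc, mul_nonneg (mul_nonneg hM0 hT) hd]
  refine le_trans (mul_le_mul_of_nonneg_left key hC.le) (le_of_eq ?_)
  ring
end

section
/- For every 0 < s < 1 and every x > 0, (x/(x+s))^{1−s} ≤ Γ(x+s)/(x^s Γ(x)). -/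
/-! Log-convexity of `Γ` between `x + s` and `x + s + 1`, with weights `s` and `1 - s`, combined
with `Γ(y + 1) = y Γ(y)`, gives `x Γ(x) = Γ(x + 1) ≤ (x + s)^(1 - s) Γ(x + s)`, which is the
inequality after clearing denominators. -/

open Real

theorem Real.Gamma_add_one_sub_le_rpow_mul_Gamma {y s : ℝ} (hy : 0 < y) (hs : 0 < s) (hs1 : s < 1) :
    Gamma (y + 1 - s) ≤ y ^ (1 - s) * Gamma y := by
  have hΓ : 0 < Gamma y := Gamma_pos_of_pos hy
  have hconv := Gamma_mul_add_mul_le_rpow_Gamma_mul_rpow_Gamma (t := y + 1) hy (by linarith) hs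
    (by linarith : 0 < 1 - s) (by ring)
  calc Gamma (y + 1 - s) = Gamma (s * y + (1 - s) * (y + 1)) := by ring_nf
    _ ≤ Gamma y ^ s * Gamma (y + 1) ^ (1 - s) := hconv
    _ = y ^ (1 - s) * Gamma y := by
      rw [Gamma_add_one hy.ne', mul_rpow hy.le hΓ.le, mul_left_comm, ← rpow_add hΓ]
      norm_num

theorem wendel_inequality (s x : ℝ) (hs : 0 < s) (hs1 : s < 1) (hx : 0 < x) :
    (x / (x + s)) ^ (1 - s) ≤ Real.Gamma (x + s) / (x ^ s * Real.Gamma x) := by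
  have hxs : 0 < x + s := by linarith
  have key : x * Gamma x ≤ (x + s) ^ (1 - s) * Gamma (x + s) := by
    rw [← Gamma_add_one hx.ne', show x + 1 = x + s + 1 - s by ring]
    exact Gamma_add_one_sub_le_rpow_mul_Gamma hxs hs hs1
  rw [div_rpow hx.le hxs.le, div_le_div_iff₀ (by positivity) (by positivity)]
  calc x ^ (1 - s) * (x ^ s * Gamma x) = x * Gamma x := by
        rw [← mul_assoc, ← rpow_add hx]; norm_num
    _ ≤ (x + s) ^ (1 - s) * Gamma (x + s) := key
    _ = Gamma (x + s) * (x + s) ^ (1 - s) := mul_comm _ _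
end

section
/- Let 0 < a' < a < 1. Define d^{(n)}_1 := ∫₀¹ (|1 − u^{a'−a}|/(1−u)^{a'+1}) u^{(n+2)a − n a'} du for n ∈ ℕ. Then there exists a constant C > 0 such that d^{(n)}_1 ≤ C n^{a'−1} for all n ≥ 1; in particular d^{(n)}_1 → 0 as n → ∞. -/
open MeasureTheory Filter

/-- Bernoulli-type inequality: `u ^ (-t) - 1 ≤ t * ((1 - u) / u)` for `0 < u ≤ 1`,
`0 ≤ t ≤ 1`. -/
lemma d1_aux_bernoulli {u t : ℝ} (hu0 : 0 < u) (hu1 : u ≤ 1) (ht0 : 0 ≤ t) (ht1 : t ≤ 1) :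
    u ^ (-t) - 1 ≤ t * ((1 - u) / u) := by
  have hs : (0:ℝ) ≤ (1 - u) / u := div_nonneg (by linarith) hu0.le
  have h := rpow_one_add_le_one_add_mul_self (s := (1 - u) / u) (by linarith) ht0 ht1
  have h1 : 1 + (1 - u) / u = u⁻¹ := by field_simp; ring
  rw [h1] at h
  have h2 : u⁻¹ ^ t = u ^ (-t) := by
    rw [Real.inv_rpow hu0.le, ← Real.rpow_neg hu0.le]
  rw [h2] at h
  linarith

/-- Pointwise bound for the integrand. -/
lemma d1_aux_pointwise {a a' : ℝ} (ha'0 : 0 < a') (haa : a' < a) (ha1 : a < 1) (P : ℝ)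
    {u : ℝ} (hu : u ∈ Set.Ioc (0:ℝ) 1) :
    |1 - u ^ (a' - a)| / (1 - u) ^ (a' + 1) * u ^ P
      ≤ (a - a') * ((1 - u) ^ (-a') * u ^ (P - 1)) := by
  obtain ⟨hu0, hu1⟩ := hu
  rcases eq_or_lt_of_le hu1 with rfl | hu1
  · simp [Real.one_rpow, Real.zero_rpow (by positivity : a' + 1 ≠ 0),
      Real.zero_rpow (by simp [ha'0.ne'] : -a' ≠ 0)]
  have h1u : 0 < 1 - u := by linarith
  have ht0 : 0 < a - a' := by linarith
  have hexp : u ^ (a' - a) = u ^ (-(a - a')) := by rw [neg_sub]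
  have h1 : 1 ≤ u ^ (-(a - a')) := by
    rw [← hexp]
    exact Real.one_le_rpow_of_pos_of_le_one_of_nonpos hu0 hu1.le (by linarith)
  have habs : |1 - u ^ (a' - a)| = u ^ (-(a - a')) - 1 := by
    rw [hexp, abs_sub_comm, abs_of_nonneg (by linarith)]
  have hb := d1_aux_bernoulli hu0 hu1.le ht0.le (by linarith : a - a' ≤ 1)
  have hrw : (a - a') * ((1 - u) / u) / (1 - u) ^ (a' + 1) * u ^ P
      = (a - a') * ((1 - u) ^ (-a') * u ^ (P - 1)) := by
    rw [Real.rpow_add_one h1u.ne' a', Real.rpow_neg h1u.le, Real.rpow_sub_one hu0.ne']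
    have h2 : (1 - u) ^ a' ≠ 0 := by
      exact ne_of_gt (Real.rpow_pos_of_pos h1u _)
    field_simp
  calc |1 - u ^ (a' - a)| / (1 - u) ^ (a' + 1) * u ^ P
      ≤ (a - a') * ((1 - u) / u) / (1 - u) ^ (a' + 1) * u ^ P := by
        have hden : (0:ℝ) < (1 - u) ^ (a' + 1) := Real.rpow_pos_of_pos h1u _
        apply mul_le_mul_of_nonneg_right _ (Real.rpow_nonneg hu0.le P)
        rw [habs, div_eq_mul_inv, div_eq_mul_inv (a := (a - a') * ((1 - u) / u))]
        exact mul_le_mul_of_nonneg_right hb (inv_nonneg.mpr hden.le)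
    _ = (a - a') * ((1 - u) ^ (-a') * u ^ (P - 1)) := hrw

/-- Integrability of the dominating function. -/
lemma d1_aux_integrable {a' q : ℝ} (ha'1 : a' < 1) (hq : -1 < q) :
    IntervalIntegrable (fun u : ℝ => (1 - u) ^ (-a') * u ^ q) volume 0 1 := by
  have h1 : IntervalIntegrable (fun u : ℝ => (1 - u) ^ (-a') * u ^ q) volume 0 (1/2) := by
    apply IntervalIntegrable.continuousOn_mul (intervalIntegral.intervalIntegrable_rpow' hq)
    apply ContinuousOn.rpow_const (continuous_const.sub continuous_id).continuousOn
    intro x hx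
    left
    rw [Set.uIcc_of_le (by norm_num : (0:ℝ) ≤ 1/2)] at hx
    have : x ≤ 1/2 := hx.2
    intro h
    have : (1:ℝ) - x = 0 := h
    linarith
  have h2 : IntervalIntegrable (fun u : ℝ => (1 - u) ^ (-a') * u ^ q) volume (1/2) 1 := by
    have hbase : IntervalIntegrable (fun x : ℝ => x ^ (-a')) volume 0 (1/2) :=
      intervalIntegral.intervalIntegrable_rpow' (by linarith)
    have hcomp := hbase.comp_sub_left 1
    norm_num at hcomp
    apply IntervalIntegrable.mul_continuousOn hcomp.symm
    apply ContinuousOn.rpow_const continuousOn_id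
    intro x hx
    left
    rw [Set.uIcc_of_le (by norm_num : (1:ℝ)/2 ≤ 1)] at hx
    have : (1:ℝ)/2 ≤ x := hx.1
    intro h
    rw [id] at h
    linarith
  exact h1.trans h2

/-- First piece bound. -/
lemma d1_aux_piece1 {a' q c : ℝ} (ha'0 : 0 < a') (ha'1 : a' < 1) (hq : -1 < q)
    (hc0 : 0 ≤ c) (hc1 : c < 1) :
    (∫ u in (0:ℝ)..c, (1 - u) ^ (-a') * u ^ q) ≤ (1 - c) ^ (-a') / (q + 1) := by
  have hc1' : 0 < 1 - c := by linarith
  have h1 : (∫ u in (0:ℝ)..c, (1 - u) ^ (-a') * u ^ q)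
      ≤ ∫ u in (0:ℝ)..c, (1 - c) ^ (-a') * u ^ q := by
    apply intervalIntegral.integral_mono_on hc0
    · apply (d1_aux_integrable ha'1 hq).mono_set
      rw [Set.uIcc_of_le hc0, Set.uIcc_of_le (by norm_num : (0:ℝ) ≤ 1)]
      exact Set.Icc_subset_Icc le_rfl hc1.le
    · exact (intervalIntegral.intervalIntegrable_rpow' hq).const_mul _
    · intro x hx
      apply mul_le_mul_of_nonneg_right _ (Real.rpow_nonneg hx.1 q)
      exact Real.rpow_le_rpow_of_nonpos hc1' (by linarith [hx.2]) (by linarith)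
  rw [intervalIntegral.integral_const_mul, integral_rpow (Or.inl hq)] at h1
  have hq1 : 0 < q + 1 := by linarith
  have h0 : (0:ℝ) ^ (q + 1) = 0 := Real.zero_rpow hq1.ne'
  rw [h0, sub_zero] at h1
  refine h1.trans ?_
  rw [div_eq_mul_inv]
  apply mul_le_mul_of_nonneg_left _ (Real.rpow_nonneg hc1'.le _)
  have hle1 : c ^ (q + 1) ≤ 1 := Real.rpow_le_one hc0 hc1.le hq1.le
  have hinv : (0:ℝ) ≤ (q + 1)⁻¹ := by positivity
  calc c ^ (q + 1) / (q + 1) = c ^ (q + 1) * (q + 1)⁻¹ := div_eq_mul_inv _ _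
    _ ≤ 1 * (q + 1)⁻¹ := mul_le_mul_of_nonneg_right hle1 hinv
    _ = (q + 1)⁻¹ := one_mul _

/-- Second piece bound (needs `0 ≤ q`). -/
lemma d1_aux_piece2 {a' q c : ℝ} (ha'0 : 0 < a') (ha'1 : a' < 1) (hq0 : 0 ≤ q) (hq : -1 < q)
    (hc0 : 0 ≤ c) (hc1 : c ≤ 1) :
    (∫ u in c..1, (1 - u) ^ (-a') * u ^ q) ≤ (1 - c) ^ (1 - a') / (1 - a') := by
  have hbase : IntervalIntegrable (fun x : ℝ => x ^ (-a')) volume 0 (1 - c) :=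
    intervalIntegral.intervalIntegrable_rpow' (by linarith)
  have hcomp := hbase.comp_sub_left 1
  rw [sub_sub_cancel, sub_zero] at hcomp
  replace hcomp := hcomp.symm
  have h1 : (∫ u in c..1, (1 - u) ^ (-a') * u ^ q)
      ≤ ∫ u in c..1, (1 - u) ^ (-a') := by
    apply intervalIntegral.integral_mono_on hc1
    · apply (d1_aux_integrable ha'1 hq).mono_set
      rw [Set.uIcc_of_le hc1, Set.uIcc_of_le (by norm_num : (0:ℝ) ≤ 1)]
      exact Set.Icc_subset_Icc hc0 le_rfl
    · exact hcomp
    · intro x hx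
      have hx0 : 0 ≤ x := le_trans hc0 hx.1
      calc (1 - x) ^ (-a') * x ^ q ≤ (1 - x) ^ (-a') * 1 :=
            mul_le_mul_of_nonneg_left (Real.rpow_le_one hx0 hx.2 hq0)
              (Real.rpow_nonneg (by linarith [hx.2]) _)
        _ = (1 - x) ^ (-a') := mul_one _
  refine h1.trans ?_
  have h2 : (∫ u in c..1, (1 - u) ^ (-a'))
      = ∫ x in (1 - (1:ℝ))..(1 - c), x ^ (-a') :=
    intervalIntegral.integral_comp_sub_left (fun x : ℝ => x ^ (-a')) 1
  rw [h2, sub_self, integral_rpow (Or.inl (by linarith : (-1:ℝ) < -a'))]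
  rw [Real.zero_rpow (by linarith : -a' + 1 ≠ 0), sub_zero]
  have : -a' + 1 = 1 - a' := by ring
  rw [this]

theorem d1_decay (a a' : ℝ) (ha' : 0 < a') (haa : a' < a) (ha : a < 1) :
    (∃ C > 0, ∀ n : ℕ, 1 ≤ n →
      (∫ u in (0:ℝ)..1,
          |1 - u ^ (a' - a)| / (1 - u) ^ (a' + 1) * u ^ (((n:ℝ) + 2) * a - (n:ℝ) * a'))
        ≤ C * (n:ℝ) ^ (a' - 1)) ∧
    Tendsto (fun n : ℕ =>
        ∫ u in (0:ℝ)..1,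
          |1 - u ^ (a' - a)| / (1 - u) ^ (a' + 1) * u ^ (((n:ℝ) + 2) * a - (n:ℝ) * a'))
      atTop (nhds 0) := by
  have ha'1 : a' < 1 := haa.trans ha
  have ht : 0 < a - a' := by linarith
  set t : ℝ := a - a' with htdef
  set F : ℕ → ℝ := fun n => ∫ u in (0:ℝ)..1,
      |1 - u ^ (a' - a)| / (1 - u) ^ (a' + 1) * u ^ (((n:ℝ) + 2) * a - (n:ℝ) * a') with hF
  set P : ℕ → ℝ := fun n => ((n:ℝ) + 2) * a - (n:ℝ) * a' with hP
  have hPpos : ∀ n : ℕ, 0 < P n := by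
    intro n
    have : P n = (n:ℝ) * t + 2 * a := by simp only [hP, htdef]; ring
    rw [this]
    have : (0:ℝ) ≤ (n:ℝ) * t := mul_nonneg (Nat.cast_nonneg n) ht.le
    nlinarith [ha'.trans haa]
  have hq : ∀ n : ℕ, (-1:ℝ) < P n - 1 := fun n => by linarith [hPpos n]
  clear_value t F P
  -- Step 1: reduce to the dominating integral
  have key1 : ∀ n : ℕ,
      F n ≤ t * ∫ u in (0:ℝ)..1, (1 - u) ^ (-a') * u ^ (P n - 1) := by
    intro n
    have hqn := hq n
    simp only [hP] at hqn
    simp only [hF, hP, htdef]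
    rw [← intervalIntegral.integral_const_mul,
        intervalIntegral.integral_of_le (by norm_num : (0:ℝ) ≤ 1),
        intervalIntegral.integral_of_le (by norm_num : (0:ℝ) ≤ 1)]
    apply integral_mono_of_nonneg
    · rw [Filter.EventuallyLE, ae_restrict_iff' measurableSet_Ioc]
      apply Filter.Eventually.of_forall
      intro u hu
      have h1u : 0 ≤ 1 - u := by linarith [hu.2]
      exact mul_nonneg (div_nonneg (abs_nonneg _) (Real.rpow_nonneg h1u _))
        (Real.rpow_nonneg hu.1.le _)
    · exact (intervalIntegrable_iff_integrableOn_Ioc_of_le (by norm_num : (0:ℝ) ≤ 1)).mp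
        ((d1_aux_integrable ha'1 hqn).const_mul (a - a'))
    · rw [Filter.EventuallyLE, ae_restrict_iff' measurableSet_Ioc]
      apply Filter.Eventually.of_forall
      intro u hu
      exact d1_aux_pointwise ha' haa ha _ hu
  -- nonnegativity of F
  have hFnonneg : ∀ n : ℕ, 0 ≤ F n := by
    intro n
    simp only [hF]
    apply intervalIntegral.integral_nonneg (by norm_num : (0:ℝ) ≤ 1)
    intro u hu
    exact mul_nonneg (div_nonneg (abs_nonneg _) (Real.rpow_nonneg (by linarith [hu.2]) _))
      (Real.rpow_nonneg hu.1 _)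
  -- constants
  set C₁ : ℝ := 1 + t / (1 - a') with hC₁
  have hC₁pos : 0 < C₁ := by
    have : 0 < t / (1 - a') := div_pos ht (by linarith)
    rw [hC₁]; linarith
  set q₀ : ℝ := 3 * a - a' - 1 with hq₀def
  have hq₀ : (-1:ℝ) < q₀ := by rw [hq₀def]; nlinarith [ha'.trans haa]
  set M : ℝ := t * ∫ u in (0:ℝ)..1, (1 - u) ^ (-a') * u ^ q₀ with hM
  have hMnonneg : 0 ≤ M := by
    rw [hM]
    apply mul_nonneg ht.le
    apply intervalIntegral.integral_nonneg (by norm_num : (0:ℝ) ≤ 1)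
    intro u hu
    exact mul_nonneg (Real.rpow_nonneg (by linarith [hu.2]) _) (Real.rpow_nonneg hu.1 _)
  set C₂ : ℝ := M * (1 / t) ^ (1 - a') with hC₂
  have hC₂nonneg : 0 ≤ C₂ := by
    rw [hC₂]
    exact mul_nonneg hMnonneg (Real.rpow_nonneg (by positivity) _)
  set C : ℝ := C₁ + C₂ with hC
  have hCpos : 0 < C := by rw [hC]; linarith
  clear_value q₀ M C₁ C₂ C
  -- main bound
  have main : ∀ n : ℕ, 1 ≤ n → F n ≤ C * (n:ℝ) ^ (a' - 1) := by
    intro n hn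
    have hn0 : (0:ℝ) < (n:ℝ) := by exact_mod_cast hn
    have hn1 : (1:ℝ) ≤ (n:ℝ) := by exact_mod_cast hn
    have hnpow : 0 < (n:ℝ) ^ (a' - 1) := Real.rpow_pos_of_pos hn0 _
    have hPn : P n = (n:ℝ) * t + 2 * a := by simp only [hP, htdef]; ring
    by_cases hcase : 1 ≤ P n
    · -- main case: split at c = 1 - 1/n
      set c : ℝ := 1 - 1 / (n:ℝ) with hcdef
      have hc0 : 0 ≤ c := by
        have : 1 / (n:ℝ) ≤ 1 := by
          rw [div_le_one hn0]; exact hn1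
        simp only [hcdef]; linarith
      have hc1 : c < 1 := by
        have : 0 < 1 / (n:ℝ) := by positivity
        simp only [hcdef]; linarith
      have h1c : 1 - c = 1 / (n:ℝ) := by simp only [hcdef]; ring
      have hsplit : (∫ u in (0:ℝ)..1, (1 - u) ^ (-a') * u ^ (P n - 1))
          = (∫ u in (0:ℝ)..c, (1 - u) ^ (-a') * u ^ (P n - 1))
            + ∫ u in c..1, (1 - u) ^ (-a') * u ^ (P n - 1) := by
        symm
        apply intervalIntegral.integral_add_adjacent_intervals
        · apply (d1_aux_integrable ha'1 (hq n)).mono_set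
          rw [Set.uIcc_of_le hc0, Set.uIcc_of_le (by norm_num : (0:ℝ) ≤ 1)]
          exact Set.Icc_subset_Icc le_rfl hc1.le
        · apply (d1_aux_integrable ha'1 (hq n)).mono_set
          rw [Set.uIcc_of_le hc1.le, Set.uIcc_of_le (by norm_num : (0:ℝ) ≤ 1)]
          exact Set.Icc_subset_Icc hc0 le_rfl
      have hp1 := d1_aux_piece1 ha' ha'1 (hq n) hc0 hc1
      have hp2 := d1_aux_piece2 ha' ha'1 (by linarith : (0:ℝ) ≤ P n - 1) (hq n) hc0 hc1.le
      rw [h1c] at hp1 hp2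
      have hinv1 : ((1:ℝ) / (n:ℝ)) ^ (-a') = (n:ℝ) ^ a' := by
        rw [one_div, Real.inv_rpow hn0.le, ← Real.rpow_neg hn0.le, neg_neg]
      have hinv2 : ((1:ℝ) / (n:ℝ)) ^ (1 - a') = (n:ℝ) ^ (a' - 1) := by
        rw [one_div, Real.inv_rpow hn0.le, ← Real.rpow_neg hn0.le]
        congr 1
        ring
      rw [hinv1] at hp1
      rw [hinv2] at hp2
      have hPq : P n - 1 + 1 = P n := by ring
      rw [hPq] at hp1
      -- n^a' / P n ≤ n^{a'-1} / t
      have hdiv : (n:ℝ) ^ a' / P n ≤ (n:ℝ) ^ (a' - 1) / t := by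
        have h1 : (n:ℝ) * t ≤ P n := by
          rw [hPn]; nlinarith [ha'.trans haa]
        have h2 : (n:ℝ) ^ a' / P n ≤ (n:ℝ) ^ a' / ((n:ℝ) * t) := by
          apply div_le_div_of_nonneg_left (Real.rpow_nonneg hn0.le _)
            (by positivity) h1
        refine h2.trans_eq ?_
        rw [Real.rpow_sub_one hn0.ne', div_div]
      calc F n ≤ t * ∫ u in (0:ℝ)..1, (1 - u) ^ (-a') * u ^ (P n - 1) := key1 n
        _ = t * ((∫ u in (0:ℝ)..c, (1 - u) ^ (-a') * u ^ (P n - 1))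
              + ∫ u in c..1, (1 - u) ^ (-a') * u ^ (P n - 1)) := by rw [hsplit]
        _ ≤ t * ((n:ℝ) ^ (a' - 1) / t + (n:ℝ) ^ (a' - 1) / (1 - a')) := by
              apply mul_le_mul_of_nonneg_left _ ht.le
              have := hp1.trans hdiv
              linarith
        _ = (1 + t / (1 - a')) * (n:ℝ) ^ (a' - 1) := by
              field_simp
        _ = C₁ * (n:ℝ) ^ (a' - 1) := by rw [hC₁]
        _ ≤ C * (n:ℝ) ^ (a' - 1) := by
              apply mul_le_mul_of_nonneg_right _ hnpow.le
              rw [hC]; linarith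
    · -- small case: P n < 1, so n < 1/t
      push_neg at hcase
      have hnt : (n:ℝ) * t < 1 := by
        rw [hPn] at hcase; nlinarith [ha'.trans haa]
      have hnlt : (n:ℝ) ≤ 1 / t := by
        rw [le_div_iff₀ ht]; linarith
      -- F n ≤ M
      have hmono : (∫ u in (0:ℝ)..1, (1 - u) ^ (-a') * u ^ (P n - 1))
          ≤ ∫ u in (0:ℝ)..1, (1 - u) ^ (-a') * u ^ q₀ := by
        apply intervalIntegral.integral_mono_on (by norm_num : (0:ℝ) ≤ 1)
          (d1_aux_integrable ha'1 (hq n)) (d1_aux_integrable ha'1 hq₀)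
        have hq₀le : q₀ ≤ P n - 1 := by
          rw [hq₀def, hPn, htdef]
          nlinarith
        intro x hx
        rcases eq_or_lt_of_le hx.1 with rfl | hx0
        · rw [Real.zero_rpow (ne_of_lt (by linarith : P n - 1 < 0)),
              Real.zero_rpow (ne_of_lt (by linarith : q₀ < 0)), mul_zero]
        · exact mul_le_mul_of_nonneg_left
            (Real.rpow_le_rpow_of_exponent_ge hx0 hx.2 hq₀le)
            (Real.rpow_nonneg (by linarith [hx.2]) _)
      have hFM : F n ≤ M := by
        rw [hM]
        exact (key1 n).trans (mul_le_mul_of_nonneg_left hmono ht.le)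
      -- M ≤ C₂ * n^{a'-1}
      have hMC : M ≤ C₂ * (n:ℝ) ^ (a' - 1) := by
        have h1 : (n:ℝ) ^ (1 - a') ≤ (1 / t) ^ (1 - a') :=
          Real.rpow_le_rpow hn0.le hnlt (by linarith)
        have h2 : ((n:ℝ) ^ (1 - a')) * ((n:ℝ) ^ (a' - 1)) = 1 := by
          rw [← Real.rpow_add hn0]
          norm_num
        calc M = M * (((n:ℝ) ^ (1 - a')) * ((n:ℝ) ^ (a' - 1))) := by rw [h2, mul_one]
          _ ≤ M * ((1 / t) ^ (1 - a') * ((n:ℝ) ^ (a' - 1))) := by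
              apply mul_le_mul_of_nonneg_left _ hMnonneg
              exact mul_le_mul_of_nonneg_right h1 hnpow.le
          _ = C₂ * (n:ℝ) ^ (a' - 1) := by rw [hC₂]; ring
      calc F n ≤ M := hFM
        _ ≤ C₂ * (n:ℝ) ^ (a' - 1) := hMC
        _ ≤ C * (n:ℝ) ^ (a' - 1) := by
            apply mul_le_mul_of_nonneg_right _ hnpow.le
            rw [hC]; linarith
  constructor
  · refine ⟨C, hCpos, fun n hn => ?_⟩
    have hmn := main n hn
    simp only [hF] at hmn
    exact hmn
  -- tendsto part
  have hupper : Tendsto (fun n : ℕ => C * (n:ℝ) ^ (a' - 1)) atTop (nhds 0) := by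
    have h1 : Tendsto (fun n : ℕ => (n:ℝ) ^ (-(1 - a'))) atTop (nhds 0) :=
      (tendsto_rpow_neg_atTop (by linarith : 0 < 1 - a')).comp tendsto_natCast_atTop_atTop
    have h2 : (fun n : ℕ => C * (n:ℝ) ^ (a' - 1)) = fun n : ℕ => C * (n:ℝ) ^ (-(1 - a')) := by
      funext n
      congr 1
      ring_nf
    rw [h2]
    simpa using h1.const_mul C
  apply tendsto_of_tendsto_of_tendsto_of_le_of_le' tendsto_const_nhds hupper
  · exact Filter.Eventually.of_forall hFnonneg
  · filter_upwards [Filter.eventually_ge_atTop 1] with n hn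
    exact main n hn
end

section
/- Let (m_n) and (g_n) be nonnegative sequences with m_n = O(n^{−γ₀}) and g_n = O(B₀^n/(n^p (n!)^η)) for some γ₀ ≥ η > 0, p > 0, B₀ > 0, and define C*_n by C*_0 = c*_0 ≥ 0 and C*_{n+1} = m_n C*_n + g_n. Then there exist B > 0 and C > 0 such that C*_n ≤ C·B^n/(n!)^η for all n ≥ 1. In particular, for every T, γ > 0, the series Σ_{n≥1} C*_n T^{nγ} converges. -/
open Filter

lemma aux_summable_pow_div_factorial_rpow (η : ℝ) (hη : 0 < η) (y : ℝ) (hy : 0 < y) :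
    Summable (fun n : ℕ => y ^ n / ((n.factorial : ℝ)) ^ η) := by
  have hpos : ∀ n : ℕ, 0 < y ^ n / ((n.factorial : ℝ)) ^ η := by
    intro n
    have : (0:ℝ) < (n.factorial : ℝ) := by exact_mod_cast n.factorial_pos
    positivity
  apply summable_of_ratio_test_tendsto_lt_one (l := 0) one_pos
    (Filter.Eventually.of_forall fun n => (hpos n).ne')
  have heq : ∀ n : ℕ, y / ((n:ℝ)+1) ^ η
      = ‖y ^ (n+1) / (((n+1).factorial : ℝ)) ^ η‖ / ‖y ^ n / ((n.factorial : ℝ)) ^ η‖ := by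
    intro n
    rw [Real.norm_of_nonneg (hpos _).le, Real.norm_of_nonneg (hpos _).le]
    have hfp : (0:ℝ) < (n.factorial : ℝ) := by exact_mod_cast n.factorial_pos
    have hf : (((n+1).factorial : ℝ)) ^ η = ((n:ℝ)+1) ^ η * ((n.factorial : ℝ)) ^ η := by
      rw [Nat.factorial_succ]
      push_cast
      rw [Real.mul_rpow (by positivity) (by positivity)]
    have h1 : (0:ℝ) < ((n.factorial : ℝ)) ^ η := by positivity
    have h2 : (0:ℝ) < ((n:ℝ)+1) ^ η := by positivity
    rw [hf, pow_succ]
    field_simp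
  have h3 : Tendsto (fun n : ℕ => ((n:ℝ)+1) ^ η) atTop atTop :=
    (tendsto_rpow_atTop hη).comp
      (tendsto_atTop_add_const_right _ 1 tendsto_natCast_atTop_atTop)
  have h4 : Tendsto (fun n : ℕ => y / ((n:ℝ)+1) ^ η) atTop (nhds 0) := by
    have := h3.inv_tendsto_atTop.const_mul y
    simpa [div_eq_mul_inv] using this
  exact h4.congr heq

set_option maxHeartbeats 1000000 in
theorem recurrence_factorial_decay
    (γ₀ η p B₀ M₀ Cg cstar₀ : ℝ)
    (hη : 0 < η) (hγ₀ : η ≤ γ₀) (hp : 0 < p) (hB₀ : 0 < B₀)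
    (hM₀ : 0 < M₀) (hCg : 0 < Cg) (hc₀ : 0 ≤ cstar₀)
    (N₀ N₁ : ℕ)
    (m g : ℕ → ℝ) (hm0 : ∀ n, 0 ≤ m n) (hg0 : ∀ n, 0 ≤ g n)
    (hm : ∀ n : ℕ, N₀ ≤ n → m n ≤ M₀ * (n:ℝ) ^ (-γ₀))
    (hg : ∀ n : ℕ, N₁ ≤ n →
      g n ≤ Cg * B₀ ^ n / ((n:ℝ) ^ p * ((n.factorial : ℝ)) ^ η))
    (Cstar : ℕ → ℝ) (h0 : Cstar 0 = cstar₀)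
    (hrec : ∀ n : ℕ, Cstar (n + 1) = m n * Cstar n + g n) :
    (∃ B > 0, ∃ C > 0, ∀ n : ℕ, 1 ≤ n →
        Cstar n ≤ C * B ^ n / ((n.factorial : ℝ)) ^ η) ∧
    (∀ T γ : ℝ, 0 < T → 0 < γ →
        Summable (fun n : ℕ => Cstar (n + 1) * T ^ (((n:ℝ) + 1) * γ))) := by
  -- nonnegativity of Cstar
  have hCnn : ∀ n, 0 ≤ Cstar n := by
    intro n
    induction n with
    | zero => rw [h0]; exact hc₀
    | succ k ih =>
      rw [hrec k]
      have := mul_nonneg (hm0 k) ih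
      linarith [hg0 k]
  have h2η : (0:ℝ) < (2:ℝ) ^ η := Real.rpow_pos_of_pos two_pos η
  set N : ℕ := max (max N₀ N₁) 1 with hN
  set B : ℝ := 2 * (2:ℝ) ^ η * M₀ + (2:ℝ) ^ η * B₀ + 1 with hBdef
  have hBpos : 0 < B := by
    have h1 : 0 < 2 * (2:ℝ) ^ η * M₀ := by positivity
    have h2 : 0 < (2:ℝ) ^ η * B₀ := by positivity
    linarith
  have hBM : 2 * (2:ℝ) ^ η * M₀ ≤ B := by
    have h2 : 0 < (2:ℝ) ^ η * B₀ := by positivity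
    simp only [hBdef]; linarith
  have hBB₀ : (2:ℝ) ^ η * B₀ ≤ B := by
    have h1 : 0 < 2 * (2:ℝ) ^ η * M₀ := by positivity
    simp only [hBdef]; linarith
  have hfacpos : ∀ k : ℕ, (0:ℝ) < ((k.factorial : ℝ)) ^ η := by
    intro k
    have : (0:ℝ) < (k.factorial : ℝ) := by exact_mod_cast k.factorial_pos
    positivity
  set S : ℝ := ∑ k ∈ Finset.range (N+1), Cstar k * ((k.factorial : ℝ)) ^ η / B ^ k with hSdef
  have hSnn : ∀ k ∈ Finset.range (N+1), 0 ≤ Cstar k * ((k.factorial : ℝ)) ^ η / B ^ k := by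
    intro k _
    have := hCnn k
    have := (hfacpos k).le
    positivity
  set C : ℝ := 2 * Cg / B + S + 1 with hCdef
  have hS0 : 0 ≤ S := Finset.sum_nonneg hSnn
  have hCpos : 0 < C := by
    have : 0 ≤ 2 * Cg / B := by positivity
    simp only [hCdef]; linarith
  have hCB : 2 * Cg ≤ C * B := by
    have h1 : 2 * Cg / B * B = 2 * Cg := div_mul_cancel₀ _ hBpos.ne'
    have h2 : 0 ≤ (S + 1) * B := by positivity
    simp only [hCdef]
    nlinarith
  clear_value S
  clear_value B C
  -- finite-range bound
  have hfin : ∀ k : ℕ, k ≤ N → Cstar k ≤ C * B ^ k / ((k.factorial : ℝ)) ^ η := by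
    intro k hk
    have hmem : k ∈ Finset.range (N+1) := Finset.mem_range.2 (by omega)
    have h1 : Cstar k * ((k.factorial : ℝ)) ^ η / B ^ k ≤ S := by
      rw [hSdef]; exact Finset.single_le_sum hSnn hmem
    have h2 : Cstar k * ((k.factorial : ℝ)) ^ η / B ^ k ≤ C := by
      have : 0 ≤ 2 * Cg / B := by positivity
      simp only [hCdef]; linarith
    rw [div_le_iff₀ (pow_pos hBpos k)] at h2
    rw [le_div_iff₀ (hfacpos k)]
    exact h2
  -- inductive bound for n ≥ N
  have hmain : ∀ n : ℕ, N ≤ n → Cstar n ≤ C * B ^ n / ((n.factorial : ℝ)) ^ η := by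
    intro n hn
    induction n, hn using Nat.le_induction with
    | base => exact hfin N le_rfl
    | succ n hn ih =>
      have hn1 : 1 ≤ n := le_trans (le_max_right _ _) hn
      have hnN₀ : N₀ ≤ n := le_trans (le_trans (le_max_left _ _) (le_max_left _ _)) hn
      have hnN₁ : N₁ ≤ n := le_trans (le_trans (le_max_right _ _) (le_max_left _ _)) hn
      have hx1 : (1:ℝ) ≤ (n:ℝ) := by exact_mod_cast hn1
      have hx0 : (0:ℝ) < (n:ℝ) := by linarith
      -- key inequality A
      have hA : M₀ * (n:ℝ) ^ (-γ₀) * ((n:ℝ)+1) ^ η ≤ B / 2 := by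
        have h1 : (n:ℝ) ^ (-γ₀) ≤ (n:ℝ) ^ (-η) :=
          Real.rpow_le_rpow_of_exponent_le hx1 (by linarith)
        have h2 : ((n:ℝ)+1) ^ η ≤ (2:ℝ) ^ η * (n:ℝ) ^ η := by
          have h2' : ((n:ℝ)+1) ^ η ≤ (2*(n:ℝ)) ^ η :=
            Real.rpow_le_rpow (by positivity) (by linarith) hη.le
          rwa [Real.mul_rpow (by norm_num) hx0.le] at h2'
        have h4 : (n:ℝ) ^ (-η) * (n:ℝ) ^ η = 1 := by
          rw [← Real.rpow_add hx0]; simp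
        calc M₀ * (n:ℝ) ^ (-γ₀) * ((n:ℝ)+1) ^ η
            ≤ M₀ * (n:ℝ) ^ (-η) * ((2:ℝ) ^ η * (n:ℝ) ^ η) := by
              apply mul_le_mul (mul_le_mul_of_nonneg_left h1 hM₀.le) h2
                (Real.rpow_nonneg (by positivity) _) (by positivity)
          _ = M₀ * (2:ℝ) ^ η * ((n:ℝ) ^ (-η) * (n:ℝ) ^ η) := by ring
          _ = M₀ * (2:ℝ) ^ η := by rw [h4, mul_one]
          _ ≤ B / 2 := by linarith
      -- key inequality B'
      have hB' : B₀ ^ n * ((n:ℝ)+1) ^ η ≤ B ^ n := by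
        have hn2 : (n:ℝ) + 1 ≤ (2:ℝ) ^ n := by
          have h := Nat.lt_two_pow_self (n := n)
          have h' : (n:ℝ) + 1 ≤ ((2 ^ n : ℕ) : ℝ) := by exact_mod_cast h
          simpa using h'
        have h5 : ((n:ℝ)+1) ^ η ≤ ((2:ℝ) ^ n) ^ η :=
          Real.rpow_le_rpow (by positivity) hn2 hη.le
        have h6 : (((2:ℝ) ^ n)) ^ η = ((2:ℝ) ^ η) ^ n := by
          rw [← Real.rpow_natCast (2:ℝ) n, ← Real.rpow_natCast ((2:ℝ) ^ η) n,
            ← Real.rpow_mul (by norm_num), ← Real.rpow_mul (by norm_num), mul_comm]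
        calc B₀ ^ n * ((n:ℝ)+1) ^ η ≤ B₀ ^ n * ((2:ℝ) ^ η) ^ n := by
              rw [← h6]
              exact mul_le_mul_of_nonneg_left h5 (by positivity)
          _ = ((2:ℝ) ^ η * B₀) ^ n := by rw [mul_pow]; ring
          _ ≤ B ^ n := pow_le_pow_left₀ (by positivity) hBB₀ n
      -- bound on the numerator
      have hnum : (M₀ * (n:ℝ) ^ (-γ₀)) * (C * B ^ n) + Cg * B₀ ^ n
          ≤ C * B ^ (n+1) / ((n:ℝ)+1) ^ η := by
        rw [le_div_iff₀ (by positivity : (0:ℝ) < ((n:ℝ)+1) ^ η), pow_succ]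
        have hint1 : (M₀ * (n:ℝ) ^ (-γ₀) * ((n:ℝ)+1) ^ η) * (C * B ^ n)
            ≤ (B / 2) * (C * B ^ n) :=
          mul_le_mul_of_nonneg_right hA (by positivity)
        have hint2 : Cg * (B₀ ^ n * ((n:ℝ)+1) ^ η) ≤ Cg * B ^ n :=
          mul_le_mul_of_nonneg_left hB' hCg.le
        have hint3 : (2 * Cg) * B ^ n ≤ (C * B) * B ^ n :=
          mul_le_mul_of_nonneg_right hCB (by positivity)
        nlinarith [hint1, hint2, hint3]
      -- factorial split
      have hfac : (((n+1).factorial : ℝ)) ^ η = ((n:ℝ)+1) ^ η * ((n.factorial : ℝ)) ^ η := by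
        rw [Nat.factorial_succ]
        push_cast
        rw [Real.mul_rpow (by positivity) (by positivity)]
      -- assemble
      rw [hrec n]
      have hmn : m n * Cstar n
          ≤ (M₀ * (n:ℝ) ^ (-γ₀)) * (C * B ^ n / ((n.factorial : ℝ)) ^ η) := by
        apply mul_le_mul (hm n hnN₀) ih (hCnn n)
        positivity
      have hgn : g n ≤ Cg * B₀ ^ n / ((n.factorial : ℝ)) ^ η := by
        refine le_trans (hg n hnN₁) ?_
        have hxp : (1:ℝ) ≤ (n:ℝ) ^ p := Real.one_le_rpow hx1 hp.le
        have hd : ((n.factorial : ℝ)) ^ η ≤ (n:ℝ) ^ p * ((n.factorial : ℝ)) ^ η := by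
          nlinarith [hfacpos n]
        gcongr
      calc m n * Cstar n + g n
          ≤ (M₀ * (n:ℝ) ^ (-γ₀)) * (C * B ^ n / ((n.factorial : ℝ)) ^ η)
            + Cg * B₀ ^ n / ((n.factorial : ℝ)) ^ η := add_le_add hmn hgn
        _ = ((M₀ * (n:ℝ) ^ (-γ₀)) * (C * B ^ n) + Cg * B₀ ^ n) / ((n.factorial : ℝ)) ^ η := by
            ring
        _ ≤ (C * B ^ (n+1) / ((n:ℝ)+1) ^ η) / ((n.factorial : ℝ)) ^ η := by
            gcongr
        _ = C * B ^ (n+1) / (((n+1).factorial : ℝ)) ^ η := by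
            rw [hfac]; ring
  -- the global bound for n ≥ 1
  have hbound : ∀ n : ℕ, 1 ≤ n → Cstar n ≤ C * B ^ n / ((n.factorial : ℝ)) ^ η := by
    intro n hn1
    rcases le_total n N with h | h
    · exact hfin n h
    · exact hmain n h
  refine ⟨⟨B, hBpos, C, hCpos, hbound⟩, ?_⟩
  intro T γ hT hγ
  have hTγ : (0:ℝ) < T ^ γ := Real.rpow_pos_of_pos hT γ
  set y : ℝ := B * T ^ γ with hydef
  have hy : 0 < y := by positivity
  have hs : Summable (fun n : ℕ => y ^ n / ((n.factorial : ℝ)) ^ η) :=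
    aux_summable_pow_div_factorial_rpow η hη y hy
  have hs1 : Summable (fun n : ℕ => y ^ (n+1) / (((n+1).factorial : ℝ)) ^ η) :=
    (summable_nat_add_iff 1).2 hs
  clear_value y
  have hnn : ∀ n : ℕ, 0 ≤ Cstar (n + 1) * T ^ (((n:ℝ) + 1) * γ) := by
    intro n
    exact mul_nonneg (hCnn (n+1)) (Real.rpow_nonneg hT.le _)
  have hle : ∀ n : ℕ, Cstar (n + 1) * T ^ (((n:ℝ) + 1) * γ)
      ≤ C * (y ^ (n+1) / (((n+1).factorial : ℝ)) ^ η) := by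
    intro n
    have hTpow : T ^ (((n:ℝ) + 1) * γ) = (T ^ γ) ^ (n+1 : ℕ) := by
      rw [mul_comm ((n:ℝ)+1) γ, Real.rpow_mul hT.le,
        show ((n:ℝ)+1) = ((n+1 : ℕ) : ℝ) by push_cast; ring, Real.rpow_natCast]
    rw [hTpow]
    calc Cstar (n+1) * (T ^ γ) ^ (n+1)
        ≤ (C * B ^ (n+1) / (((n+1).factorial : ℝ)) ^ η) * (T ^ γ) ^ (n+1) := by
          apply mul_le_mul_of_nonneg_right (hbound (n+1) (by omega)) (by positivity)
      _ = C * (y ^ (n+1) / (((n+1).factorial : ℝ)) ^ η) := by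
          rw [hydef, mul_pow]; ring
  exact Summable.of_nonneg_of_le hnn hle (hs1.mul_left C)
end

section
/- Two-parameter Gronwall lemma: let φ : [0,T]² → [0,∞) be continuous and satisfy φ(s,t) ≤ A + c ∫₀^s ∫₀^t φ(u,v) du dv for all (s,t) ∈ [0,T]², where A, c ≥ 0. Then φ(s,t) ≤ A Σ_{n≥0} c^n (st)^n/(n!)² ≤ A e^{c s t} for all (s,t) ∈ [0,T]². -/
open MeasureTheory

theorem gronwall_plane
    (T A c : ℝ) (hT : 0 < T) (hA : 0 ≤ A) (hc : 0 ≤ c)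
    (φ : ℝ → ℝ → ℝ)
    (hcont : ContinuousOn (fun p : ℝ × ℝ => φ p.1 p.2) (Set.Icc 0 T ×ˢ Set.Icc 0 T))
    (hpos : ∀ s t : ℝ, 0 ≤ φ s t)
    (hineq : ∀ s ∈ Set.Icc (0:ℝ) T, ∀ t ∈ Set.Icc (0:ℝ) T,
      φ s t ≤ A + c * ∫ u in (0:ℝ)..s, ∫ v in (0:ℝ)..t, φ u v) :
    ∀ s ∈ Set.Icc (0:ℝ) T, ∀ t ∈ Set.Icc (0:ℝ) T,
      φ s t ≤ A * ∑' n : ℕ, c ^ n * (s * t) ^ n / ((n.factorial : ℝ)) ^ 2 ∧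
      A * (∑' n : ℕ, c ^ n * (s * t) ^ n / ((n.factorial : ℝ)) ^ 2) ≤
        A * Real.exp (c * s * t) := by
  -- clamping map
  set π : ℝ → ℝ := fun x => max 0 (min x T) with hπ
  have hπcont : Continuous π := continuous_const.max (continuous_id.min continuous_const)
  have hπmem : ∀ x, π x ∈ Set.Icc (0:ℝ) T := fun x =>
    ⟨le_max_left _ _, max_le hT.le (min_le_right _ _)⟩
  have hπeq : ∀ x ∈ Set.Icc (0:ℝ) T, π x = x := by
    intro x hx
    simp only [hπ, min_eq_left hx.2, max_eq_right hx.1]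
  -- the extension
  set ψ : ℝ → ℝ → ℝ := fun s t => φ (π s) (π t) with hψdef
  have hψeq : ∀ s ∈ Set.Icc (0:ℝ) T, ∀ t ∈ Set.Icc (0:ℝ) T, ψ s t = φ s t := by
    intro s hs t ht
    simp only [hψdef, hπeq s hs, hπeq t ht]
  have contψ : Continuous (fun p : ℝ × ℝ => ψ p.1 p.2) := by
    have : (fun p : ℝ × ℝ => ψ p.1 p.2) =
        (fun p : ℝ × ℝ => φ p.1 p.2) ∘ (fun p : ℝ × ℝ => (π p.1, π p.2)) := rfl
    rw [this]
    exact hcont.comp_continuous ((hπcont.comp continuous_fst).prodMk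
      (hπcont.comp continuous_snd)) (fun p => Set.mk_mem_prod (hπmem _) (hπmem _))
  -- bound on the square
  obtain ⟨C, hC⟩ := (isCompact_Icc.prod isCompact_Icc).exists_bound_of_continuousOn hcont
  have hCb : ∀ s ∈ Set.Icc (0:ℝ) T, ∀ t ∈ Set.Icc (0:ℝ) T, φ s t ≤ C := by
    intro s hs t ht
    exact le_trans (le_abs_self _) (hC (s, t) (Set.mk_mem_prod hs ht))
  -- integrability helpers
  have intψ : ∀ (u a b : ℝ), IntervalIntegrable (fun v => ψ u v) volume a b := by
    intro u a b
    exact (contψ.comp (continuous_const.prodMk continuous_id)).intervalIntegrable a b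
  have intψ' : ∀ (t a b : ℝ),
      IntervalIntegrable (fun u => ∫ v in (0:ℝ)..t, ψ u v) volume a b := by
    intro t a b
    exact (intervalIntegral.continuous_parametric_intervalIntegral_of_continuous'
      (f := ψ) (μ := volume) contψ 0 t).intervalIntegrable a b
  -- the inequality transported to ψ
  have hψineq : ∀ s ∈ Set.Icc (0:ℝ) T, ∀ t ∈ Set.Icc (0:ℝ) T,
      ψ s t ≤ A + c * ∫ u in (0:ℝ)..s, ∫ v in (0:ℝ)..t, ψ u v := by
    intro s hs t ht
    have hsub : ∀ {b : ℝ}, b ∈ Set.Icc (0:ℝ) T → Set.uIcc (0:ℝ) b ⊆ Set.Icc (0:ℝ) T := by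
      intro b hb
      rw [Set.uIcc_of_le hb.1]
      exact Set.Icc_subset_Icc le_rfl hb.2
    have key : (∫ u in (0:ℝ)..s, ∫ v in (0:ℝ)..t, φ u v)
        = ∫ u in (0:ℝ)..s, ∫ v in (0:ℝ)..t, ψ u v := by
      apply intervalIntegral.integral_congr
      intro u hu
      apply intervalIntegral.integral_congr
      intro v hv
      exact (hψeq u (hsub hs hu) v (hsub ht hv)).symm
    rw [hψeq s hs t ht, ← key]
    exact hineq s hs t ht
  -- the iterate coefficients
  set a : ℕ → ℕ → ℝ := fun n k =>
    if k < n then A * c ^ k / (k.factorial : ℝ) ^ 2 else C * c ^ n / (n.factorial : ℝ) ^ 2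
    with ha
  set g : ℕ → ℝ → ℝ → ℝ := fun n u v => ∑ k ∈ Finset.range (n + 1), a n k * (u ^ k * v ^ k)
    with hg
  have contg : ∀ n, Continuous (fun p : ℝ × ℝ => g n p.1 p.2) := by
    intro n
    exact continuous_finset_sum _ fun k _ =>
      continuous_const.mul ((continuous_fst.pow k).mul (continuous_snd.pow k))
  have intg : ∀ (n : ℕ) (u a' b' : ℝ), IntervalIntegrable (fun v => g n u v) volume a' b' := by
    intro n u a' b'
    exact ((contg n).comp (continuous_const.prodMk continuous_id)).intervalIntegrable a' b'
  have intg' : ∀ (n : ℕ) (t a' b' : ℝ),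
      IntervalIntegrable (fun u => ∫ v in (0:ℝ)..t, g n u v) volume a' b' := by
    intro n t a' b'
    exact (intervalIntegral.continuous_parametric_intervalIntegral_of_continuous'
      (f := g n) (μ := volume) (contg n) 0 t).intervalIntegrable a' b'
  -- evaluate the inner integral
  have int_inner : ∀ (n : ℕ) (t u : ℝ), (∫ v in (0:ℝ)..t, g n u v)
      = ∑ k ∈ Finset.range (n + 1), a n k * (t ^ (k+1) / (k+1)) * u ^ k := by
    intro n t u
    simp only [hg]
    rw [intervalIntegral.integral_finset_sum (f := fun (k : ℕ) (v : ℝ) => a n k * (u ^ k * v ^ k))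
      (fun k _ => (Continuous.intervalIntegrable (by fun_prop) _ _))]
    refine Finset.sum_congr rfl fun k _ => ?_
    have : (fun v : ℝ => a n k * (u ^ k * v ^ k)) = fun v : ℝ => (a n k * u ^ k) * v ^ k := by
      funext v; ring
    rw [this, intervalIntegral.integral_const_mul, integral_pow]
    ring
  -- evaluate the double integral
  have int_outer : ∀ (n : ℕ) (s t : ℝ),
      (∫ u in (0:ℝ)..s, ∫ v in (0:ℝ)..t, g n u v)
      = ∑ k ∈ Finset.range (n + 1), a n k * (t ^ (k+1) / (k+1)) * (s ^ (k+1) / (k+1)) := by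
    intro n s t
    simp only [int_inner n t]
    rw [intervalIntegral.integral_finset_sum
      (f := fun (k : ℕ) (u : ℝ) => a n k * (t ^ (k+1) / (k+1)) * u ^ k)
      (fun k _ => (Continuous.intervalIntegrable (by fun_prop) _ _))]
    refine Finset.sum_congr rfl fun k _ => ?_
    rw [intervalIntegral.integral_const_mul, integral_pow]
    ring
  -- the algebraic recursion g (n+1) s t = A + c * ∫∫ g n
  have step_eq : ∀ (n : ℕ) (s t : ℝ),
      A + c * (∫ u in (0:ℝ)..s, ∫ v in (0:ℝ)..t, g n u v) = g (n+1) s t := by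
    intro n s t
    rw [int_outer]
    simp only [hg]
    rw [Finset.sum_range_succ' _ (n+1)]
    have h0 : a (n+1) 0 * (s ^ 0 * t ^ 0) = A := by
      simp [ha, Nat.succ_pos]
    rw [h0, Finset.mul_sum, add_comm]
    congr 1
    refine Finset.sum_congr rfl fun k hk => ?_
    have hk' : k ≤ n := Nat.lt_succ_iff.mp (Finset.mem_range.mp hk)
    have hfac : ∀ m : ℕ, (((m+1 : ℕ).factorial : ℕ) : ℝ) = ((m : ℝ)+1) * ((m.factorial : ℕ) : ℝ) := by
      intro m; rw [Nat.factorial_succ]; push_cast; ring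
    have hfacne : ∀ m : ℕ, ((m.factorial : ℝ)) ≠ 0 := fun m =>
      Nat.cast_ne_zero.mpr m.factorial_ne_zero
    have hkne : ((k:ℝ) + 1) ≠ 0 := by positivity
    by_cases hkn : k < n
    · have h1 : a n k = A * c ^ k / (k.factorial : ℝ) ^ 2 := if_pos hkn
      have h2 : a (n+1) (k+1) = A * c ^ (k+1) / ((k+1).factorial : ℝ) ^ 2 :=
        if_pos (Nat.succ_lt_succ hkn)
      rw [h1, h2, hfac k]
      field_simp
      ring
    · have hkeq : k = n := le_antisymm hk' (le_of_not_gt hkn)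
      subst hkeq
      have h1 : a k k = C * c ^ k / (k.factorial : ℝ) ^ 2 := if_neg (lt_irrefl k)
      have h2 : a (k+1) (k+1) = C * c ^ (k+1) / ((k+1).factorial : ℝ) ^ 2 :=
        if_neg (lt_irrefl (k+1))
      rw [h1, h2, hfac k]
      field_simp
      ring
  -- main induction
  have main : ∀ (n : ℕ), ∀ s ∈ Set.Icc (0:ℝ) T, ∀ t ∈ Set.Icc (0:ℝ) T, ψ s t ≤ g n s t := by
    intro n
    induction n with
    | zero =>
      intro s hs t ht
      have : g 0 s t = C := by simp [hg, ha]
      rw [this, hψeq s hs t ht]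
      exact hCb s hs t ht
    | succ n ih =>
      intro s hs t ht
      have hmono : (∫ u in (0:ℝ)..s, ∫ v in (0:ℝ)..t, ψ u v)
          ≤ ∫ u in (0:ℝ)..s, ∫ v in (0:ℝ)..t, g n u v := by
        apply intervalIntegral.integral_mono_on hs.1 (intψ' t 0 s) (intg' n t 0 s)
        intro u hu
        apply intervalIntegral.integral_mono_on ht.1 (intψ u 0 t) (intg n u 0 t)
        intro v hv
        exact ih u ⟨hu.1, le_trans hu.2 hs.2⟩ v ⟨hv.1, le_trans hv.2 ht.2⟩
      calc ψ s t ≤ A + c * ∫ u in (0:ℝ)..s, ∫ v in (0:ℝ)..t, ψ u v := hψineq s hs t ht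
        _ ≤ A + c * ∫ u in (0:ℝ)..s, ∫ v in (0:ℝ)..t, g n u v := by
            have := mul_le_mul_of_nonneg_left hmono hc
            linarith
        _ = g (n+1) s t := step_eq n s t
  -- now conclude
  intro s hs t ht
  have hst : 0 ≤ s * t := mul_nonneg hs.1 ht.1
  have hx : 0 ≤ c * (s * t) := mul_nonneg hc hst
  -- summability
  have hterm_nonneg : ∀ n : ℕ, 0 ≤ c ^ n * (s * t) ^ n / ((n.factorial : ℝ)) ^ 2 := by
    intro n; positivity
  have hterm_le : ∀ n : ℕ, c ^ n * (s * t) ^ n / ((n.factorial : ℝ)) ^ 2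
      ≤ (c * (s * t)) ^ n / (n.factorial : ℝ) := by
    intro n
    have h1 : (c * (s * t)) ^ n = c ^ n * (s * t) ^ n := mul_pow _ _ _
    rw [h1]
    have h2 : (1:ℝ) ≤ (n.factorial : ℝ) := by exact_mod_cast n.factorial_pos
    have h3 : ((n.factorial : ℝ)) ≤ ((n.factorial : ℝ)) ^ 2 := by nlinarith
    exact div_le_div_of_nonneg_left (by positivity) (by positivity) h3
  have hsummable : Summable (fun n : ℕ => c ^ n * (s * t) ^ n / ((n.factorial : ℝ)) ^ 2) :=
    Summable.of_nonneg_of_le hterm_nonneg hterm_le (Real.summable_pow_div_factorial _)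
  -- g n s t in split form
  have g_split : ∀ n : ℕ, g n s t =
      A * (∑ k ∈ Finset.range n, c ^ k * (s * t) ^ k / ((k.factorial : ℝ)) ^ 2)
      + C * (c ^ n * (s * t) ^ n / ((n.factorial : ℝ)) ^ 2) := by
    intro n
    simp only [hg]
    rw [Finset.sum_range_succ, Finset.mul_sum]
    congr 1
    · refine Finset.sum_congr rfl fun k hk => ?_
      rw [ha]
      simp only [if_pos (Finset.mem_range.mp hk)]
      rw [mul_pow]
      ring
    · rw [ha]
      simp only [lt_irrefl, if_false]
      rw [mul_pow]
      ring
  -- limits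
  have hP : Filter.Tendsto
      (fun n => A * (∑ k ∈ Finset.range n, c ^ k * (s * t) ^ k / ((k.factorial : ℝ)) ^ 2))
      Filter.atTop (nhds (A * ∑' n : ℕ, c ^ n * (s * t) ^ n / ((n.factorial : ℝ)) ^ 2)) :=
    (hsummable.hasSum.tendsto_sum_nat).const_mul A
  have hr : Filter.Tendsto
      (fun n : ℕ => C * (c ^ n * (s * t) ^ n / ((n.factorial : ℝ)) ^ 2))
      Filter.atTop (nhds 0) := by
    have h0 : Filter.Tendsto (fun n : ℕ => c ^ n * (s * t) ^ n / ((n.factorial : ℝ)) ^ 2)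
        Filter.atTop (nhds 0) :=
      squeeze_zero hterm_nonneg hterm_le (FloorSemiring.tendsto_pow_div_factorial_atTop _)
    simpa using h0.const_mul C
  have hglim : Filter.Tendsto (fun n => g n s t) Filter.atTop
      (nhds (A * ∑' n : ℕ, c ^ n * (s * t) ^ n / ((n.factorial : ℝ)) ^ 2)) := by
    have := hP.add hr
    rw [add_zero] at this
    simpa only [g_split] using this
  have hφle : φ s t ≤ A * ∑' n : ℕ, c ^ n * (s * t) ^ n / ((n.factorial : ℝ)) ^ 2 := by
    rw [← hψeq s hs t ht]
    exact ge_of_tendsto hglim (Filter.Eventually.of_forall fun n => main n s hs t ht)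
  refine ⟨hφle, ?_⟩
  -- compare with exp
  have hexp : Real.exp (c * s * t) = ∑' n : ℕ, (c * (s * t)) ^ n / (n.factorial : ℝ) := by
    rw [mul_assoc, Real.exp_eq_exp_ℝ, NormedSpace.exp_eq_tsum_div]
  rw [hexp]
  exact mul_le_mul_of_nonneg_left
    (Summable.tsum_le_tsum hterm_le hsummable (Real.summable_pow_div_factorial _)) hA
end
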